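/- arXiv:2011.10340 — 2 statements merged into one kernel-verified Lean document; each statement's English description precedes it below -/
import Mathlib

section
/- For the permutation representation of S_n on ℂ^n and any transposition (i j), the Kirchhoff difference κ_{ij} = 1 − (i j) ∈ ℂ[S_n] is a Lie element: for all m, Grp_m(1 − (i j)) = Alg_m(1 − (i j)) as operators on Λ^m ℂ^n. -/
/-!
The transposition `(i j)` acts on `ℂ^n` as `1 + N` with `N x = (x_j - x_i) • (e_i - e_j)` of rank
one. For any `f = 1 + N` with `N` of rank one, `Λ^m f = 1 + D_N`: expanding
`f v_1 ∧ … ∧ f v_m` multilinearly, every term in which `N` occurs twice is a wedge containing two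
multiples of the same vector. Since the derivation `D_f` is additive in `f` and `D_1 = m`, both
`Grp_m (1 - g)` and `Alg_m (1 - g)` equal `-D_N`.
-/

open ExteriorAlgebra

variable (k : Type*) [Field k] {G : Type*} [Group G]
variable {V : Type*} [AddCommGroup V] [Module k V]

/-- The alternating map `v ↦ Σ_p v_1 ∧ … ∧ f(v_p) ∧ … ∧ v_m`, landing in the
exterior algebra. -/
noncomputable def algAlt (f : Module.End k V) (m : ℕ) :
    V [⋀^Fin m]→ₗ[k] ExteriorAlgebra k V where
  toMultilinearMap :=
    ∑ p : Fin m, (ιMulti k m).toMultilinearMap.compLinearMap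
      (Function.update (fun _ : Fin m => (LinearMap.id : V →ₗ[k] V)) p f)
  map_eq_zero_of_eq' := by
    intro v i j hv hij
    show (∑ p : Fin m, (ιMulti k m).toMultilinearMap.compLinearMap
      (Function.update (fun _ : Fin m => (LinearMap.id : V →ₗ[k] V)) p f)) v = 0
    have key : ∀ p : Fin m,
        ((ιMulti k m).toMultilinearMap.compLinearMap
          (Function.update (fun _ : Fin m => (LinearMap.id : V →ₗ[k] V)) p f)) v
        = ιMulti k m (Function.update v p (f (v p))) := by
      intro p
      have harg : (fun x => (Function.update (fun _ : Fin m => (LinearMap.id : V →ₗ[k] V)) p f x) (v x))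
          = Function.update v p (f (v p)) := by
        funext x
        rcases eq_or_ne x p with rfl | hx
        · simp
        · simp [Function.update_of_ne hx]
      rw [MultilinearMap.compLinearMap_apply, harg]
      rfl
    rw [MultilinearMap.sum_apply]
    calc (∑ p : Fin m, ((ιMulti k m).toMultilinearMap.compLinearMap
          (Function.update (fun _ : Fin m => (LinearMap.id : V →ₗ[k] V)) p f)) v)
        = ∑ p ∈ ({i, j} : Finset (Fin m)), ιMulti k m (Function.update v p (f (v p))) := by
          rw [Finset.sum_congr rfl (fun p _ => key p)]
          refine (Finset.sum_subset (Finset.subset_univ _) ?_).symm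
          intro p _ hp
          simp only [Finset.mem_insert, Finset.mem_singleton, not_or] at hp
          exact AlternatingMap.map_eq_zero_of_eq _ _
            (by rw [Function.update_of_ne (Ne.symm ?_), Function.update_of_ne (Ne.symm ?_), hv]
                exacts [hp.2, hp.1]) hij
      _ = 0 := by
          rw [Finset.sum_pair hij]
          have hcomp : Function.update v j (f (v j))
              = (Function.update v i (f (v i))) ∘ Equiv.swap i j := by
            funext x
            rcases eq_or_ne x i with rfl | hxi
            · show Function.update v j (f (v j)) x = Function.update v x (f (v x)) (Equiv.swap x j x)
              rw [Function.update_of_ne hij, Equiv.swap_apply_left,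
                Function.update_of_ne (Ne.symm hij)]
              exact hv
            rcases eq_or_ne x j with rfl | hxj
            · show Function.update v x (f (v x)) x = Function.update v i (f (v i)) (Equiv.swap i x x)
              rw [Function.update_self, Equiv.swap_apply_right, Function.update_self, hv]
            · show Function.update v j (f (v j)) x = Function.update v i (f (v i)) (Equiv.swap i j x)
              rw [Function.update_of_ne hxj, Equiv.swap_apply_of_ne_of_ne hxi hxj,
                Function.update_of_ne hxi]
          rw [hcomp, AlternatingMap.map_swap _ _ hij, add_neg_cancel]

/-- The derivation `D_f` on the exterior algebra extending `f : V → V`. -/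
noncomputable def derOp (f : Module.End k V) :
    ExteriorAlgebra k V →ₗ[k] ExteriorAlgebra k V :=
  ExteriorAlgebra.liftAlternating (fun m => algAlt k f m)

theorem derOp_mem (f : Module.End k V) (m : ℕ) :
    ∀ x ∈ ⋀[k]^m V, derOp k f x ∈ ⋀[k]^m V := by
  intro x hx
  rw [← ExteriorAlgebra.ιMulti_span_fixedDegree] at hx ⊢
  induction hx using Submodule.span_induction with
  | mem x hx =>
      obtain ⟨v, rfl⟩ := hx
      rw [derOp, ExteriorAlgebra.liftAlternating_apply_ιMulti]
      show (∑ p : Fin m, (ιMulti k m).toMultilinearMap.compLinearMap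
        (Function.update (fun _ : Fin m => (LinearMap.id : V →ₗ[k] V)) p f)) v ∈ _
      rw [MultilinearMap.sum_apply]
      refine Submodule.sum_mem _ fun p _ => Submodule.subset_span ⟨_, rfl⟩
  | zero => simp
  | add x y _ _ hx hy => rw [map_add]; exact Submodule.add_mem _ hx hy
  | smul c x _ hx => rw [map_smul]; exact Submodule.smul_mem _ c hx

theorem mapOp_mem (f : Module.End k V) (m : ℕ) :
    ∀ x ∈ ⋀[k]^m V, (ExteriorAlgebra.map f) x ∈ ⋀[k]^m V := by
  intro x hx
  rw [← ExteriorAlgebra.ιMulti_span_fixedDegree] at hx ⊢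
  induction hx using Submodule.span_induction with
  | mem x hx =>
      obtain ⟨v, rfl⟩ := hx
      rw [ExteriorAlgebra.map_apply_ιMulti]
      exact Submodule.subset_span ⟨_, rfl⟩
  | zero => simp
  | add x y _ _ hx hy => rw [map_add]; exact Submodule.add_mem _ hx hy
  | smul c x _ hx => rw [map_smul]; exact Submodule.smul_mem _ c hx

/-- `Grp_m : k[G] → End(Λ^m V)`, the linear extension of `g ↦ (v₁∧…∧vₘ ↦ g v₁∧…∧g vₘ)`. -/
noncomputable def GrpOp (ρ : Representation k G V) (m : ℕ) :
    MonoidAlgebra k G →ₗ[k] Module.End k (⋀[k]^m V) :=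
  Finsupp.lift (Module.End k (⋀[k]^m V)) k G
    (fun g => ((ExteriorAlgebra.map (ρ g)).toLinearMap).restrict (mapOp_mem k (ρ g) m))
    ∘ₗ (MonoidAlgebra.coeffLinearEquiv k : MonoidAlgebra k G ≃ₗ[k] (G →₀ k)).toLinearMap

/-- `Alg_m : k[G] → End(Λ^m V)`, the linear extension of
`g ↦ (v₁∧…∧vₘ ↦ Σ_p v₁∧…∧g vₚ∧…∧vₘ)`. -/
noncomputable def AlgOp (ρ : Representation k G V) (m : ℕ) :
    MonoidAlgebra k G →ₗ[k] Module.End k (⋀[k]^m V) :=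
  Finsupp.lift (Module.End k (⋀[k]^m V)) k G
    (fun g => (derOp k (ρ g)).restrict (derOp_mem k (ρ g) m))
    ∘ₗ (MonoidAlgebra.coeffLinearEquiv k : MonoidAlgebra k G ≃ₗ[k] (G →₀ k)).toLinearMap

/-- `x ∈ k[G]` is a Lie element for the representation `ρ` if `Grp_m x = Alg_m x`
for all `m = 0, 1, …, dim V`. -/
def IsLieElement (ρ : Representation k G V) (x : MonoidAlgebra k G) : Prop :=
  ∀ m ≤ Module.finrank k V, GrpOp k ρ m x = AlgOp k ρ m x
/-- The permutation representation of `S_n` on `ℂ^n`: `σ` sends the basis vector `v_p`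
to `v_{σ(p)}`, i.e. `(σ·x) i = x (σ⁻¹ i)`. -/
noncomputable def permRep (n : ℕ) : Representation ℂ (Equiv.Perm (Fin n)) (Fin n → ℂ) where
  toFun σ := LinearMap.funLeft ℂ ℂ ⇑σ⁻¹
  map_one' := by
    ext v i
    simp
  map_mul' σ τ := by
    refine LinearMap.ext fun v => funext fun i => ?_
    simp [LinearMap.funLeft_apply, Equiv.Perm.mul_apply, mul_inv_rev, Module.End.mul_apply]

/-- The Kirchhoff difference `κ_{ij} = 1 − (i j) ∈ ℂ[S_n]`. -/
noncomputable def kappa {n : ℕ} (i j : Fin n) : MonoidAlgebra ℂ (Equiv.Perm (Fin n)) :=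
  1 - MonoidAlgebra.of ℂ (Equiv.Perm (Fin n)) (Equiv.swap i j)

open Function

theorem derOp_ιMulti (f : Module.End k V) (m : ℕ) (v : Fin m → V) :
    derOp k f (ιMulti k m v) = ∑ p : Fin m, ιMulti k m (update v p (f (v p))) := by
  simp only [derOp, liftAlternating_apply_ιMulti, algAlt]
  simp only [AlternatingMap.coe_mk, sum_apply, MultilinearMap.compLinearMap_apply]
  refine Finset.sum_congr rfl fun p _ => congrArg _ (funext fun x => ?_)
  by_cases hx : x = p <;> simp [hx]

theorem derOp_add (f g : Module.End k V) : derOp k (f + g) = derOp k f + derOp k g := by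
  ext m v
  simp [derOp_ιMulti, AlternatingMap.map_update_add, Finset.sum_add_distrib]

theorem AlternatingMap.map_eq_zero_of_apply_eq_smul_of_apply_eq_smul
    {R M N ι : Type*} [CommSemiring R] [AddCommMonoid M] [Module R M] [AddCommMonoid N]
    [Module R N] [DecidableEq ι] (g : M [⋀^ι]→ₗ[R] N) {x : ι → M} {u : M} {a b : ι} {ca cb : R}
    (hab : a ≠ b) (ha : x a = ca • u) (hb : x b = cb • u) : g x = 0 := by
  have hx : x = update (update x a (ca • u)) b (cb • u) := by
    rw [← ha, ← hb, update_eq_self, update_eq_self]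
  rw [hx, g.map_update_smul, update_comm hab, g.map_update_smul, ← update_comm hab,
    g.map_update_update x hab, smul_zero, smul_zero]

theorem AlternatingMap.map_add_smul_eq {R M N ι : Type*} [CommRing R] [AddCommGroup M]
    [Module R M] [AddCommGroup N] [Module R N] [Fintype ι] [DecidableEq ι]
    (g : M [⋀^ι]→ₗ[R] N) (v : ι → M) (u : M) (c : ι → R) :
    g (fun p => v p + c p • u) = g v + ∑ p, g (update v p (c p • u)) := by
  set w : ι → M := fun p => c p • u
  have hexpand : g (fun p => v p + c p • u) = ∑ s : Finset ι, g (s.piecewise w v) := by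
    rw [show (fun p => v p + c p • u) = w + v from funext fun p => add_comm _ _]
    exact g.toMultilinearMap.map_add_univ w v
  set T : Finset (Finset ι) := insert ∅ (Finset.univ.map ⟨({·}), Finset.singleton_injective⟩)
  have hvanish : ∀ s ∉ T, g (s.piecewise w v) = 0 := by
    intro s hs
    simp only [T, Finset.mem_insert, Finset.mem_map, Finset.mem_univ, true_and,
      Function.Embedding.coeFn_mk, not_or, not_exists] at hs
    obtain ⟨a, rfl⟩ | ⟨a, ha, b, hb, hab⟩ :=
      (Finset.nonempty_iff_ne_empty.mpr hs.1).exists_eq_singleton_or_nontrivial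
    · exact absurd rfl (hs.2 a)
    · exact g.map_eq_zero_of_apply_eq_smul_of_apply_eq_smul hab
        (Finset.piecewise_eq_of_mem _ _ _ ha) (Finset.piecewise_eq_of_mem _ _ _ hb)
  rw [hexpand, ← Finset.sum_subset (Finset.subset_univ T) fun s _ hs => hvanish s hs,
    Finset.sum_insert (by simp), Finset.sum_map, Finset.piecewise_empty]
  simp [Finset.piecewise_singleton, w]

theorem map_one_add_smulRight (φ : Module.Dual k V) (u : V) :
    (ExteriorAlgebra.map (1 + φ.smulRight u)).toLinearMap = 1 + derOp k (φ.smulRight u) := by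
  ext m v
  simp [derOp_ιMulti, (ιMulti k m).map_add_smul_eq v u fun p => φ (v p)]

theorem GrpOp_of (ρ : Representation k G V) (m : ℕ) (g : G) :
    GrpOp k ρ m (MonoidAlgebra.of k G g) =
      (ExteriorAlgebra.map (ρ g)).toLinearMap.restrict (mapOp_mem k (ρ g) m) := by
  simp [GrpOp]

theorem AlgOp_of (ρ : Representation k G V) (m : ℕ) (g : G) :
    AlgOp k ρ m (MonoidAlgebra.of k G g) = (derOp k (ρ g)).restrict (derOp_mem k (ρ g) m) := by
  simp [AlgOp]

theorem isLieElement_one_sub_of (ρ : Representation k G V) (g : G) (φ : Module.Dual k V) (u : V)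
    (hg : ρ g = 1 + φ.smulRight u) : IsLieElement k ρ (1 - MonoidAlgebra.of k G g) := by
  intro m _
  rw [← map_one (MonoidAlgebra.of k G), map_sub, map_sub, GrpOp_of, GrpOp_of, AlgOp_of, AlgOp_of,
    map_one, hg]
  refine LinearMap.ext fun x => Subtype.ext ?_
  have hid : ExteriorAlgebra.map (1 : Module.End k V) = AlgHom.id k _ := map_id
  simp [hid, map_one_add_smulRight, derOp_add]

theorem permRep_swap {n : ℕ} (i j : Fin n) :
    permRep n (Equiv.swap i j) =
      1 + (LinearMap.proj (R := ℂ) (φ := fun _ : Fin n => ℂ) j - LinearMap.proj i).smulRight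
        (Pi.single i 1 - Pi.single j 1) := by
  refine LinearMap.ext fun x => funext fun p => ?_
  simp only [permRep, Equiv.Perm.coe_inv, MonoidHom.coe_mk, OneHom.coe_mk, Equiv.symm_swap,
    LinearMap.funLeft_apply, Equiv.swap_apply_def, LinearMap.add_apply, Module.End.one_apply,
    LinearMap.coe_smulRight, LinearMap.sub_apply, LinearMap.coe_proj, eval, Pi.add_apply,
    Pi.smul_apply, Pi.sub_apply, Pi.single_apply, smul_eq_mul]
  split_ifs <;> simp_all

theorem kappa_isLieElement_general {n : ℕ} (i j : Fin n) :
    IsLieElement ℂ (permRep n) (kappa i j) :=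
  isLieElement_one_sub_of ℂ _ _ _ _ (permRep_swap i j)

/-- The Kirchhoff difference `κ_{ij} = 1 − (i j)` is a Lie element with respect to the
permutation representation of `S_n` on `ℂ^n`. -/
theorem kappa_isLieElement {n : ℕ} (i j : Fin n) (hij : i ≠ j) :
    IsLieElement ℂ (permRep n) (kappa i j) :=
  kappa_isLieElement_general i j
end

section
/- The shuffle determinant equals the coefficient of the monomial x_1 x_2 ⋯ x_n in det(A + BX)^2, where X = diag(x_1,…,x_n): sdet(A,B) = [x_1⋯x_n : det(A + BX)^2]. -/
/-- The `I`-shuffle of `A` and `B` (column convention): the matrix whose `j`-th column is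
the `j`-th column of `A` if `j ∈ I` and the `j`-th column of `B` otherwise. -/
def shuffleMatrix {n : ℕ} {R : Type*} (A B : Matrix (Fin n) (Fin n) R)
    (I : Finset (Fin n)) : Matrix (Fin n) (Fin n) R :=
  fun i j => if j ∈ I then A i j else B i j

/-- The shuffle determinant `sdet(A,B) = Σ_I det((A,B)_I) det((A,B)_{Ī})`. -/
def sdet {n : ℕ} {R : Type*} [CommRing R] (A B : Matrix (Fin n) (Fin n) R) : R :=
  ∑ I : Finset (Fin n), (shuffleMatrix A B I).det * (shuffleMatrix A B Iᶜ).det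

/-!
Column `j` of `A + BX` is `A_j + x_j B_j`, so multilinearity of the determinant in the columns
gives `det(A + BX) = Σ_I (∏_{j ∉ I} x_j) det((A,B)_I)`. In the square of this sum every product of
two squarefree monomials `∏_{j ∉ I} x_j · ∏_{j ∉ J} x_j` equals `x_1 ⋯ x_n` exactly when
`J = Iᶜ`, which leaves `Σ_I det((A,B)_I) det((A,B)_{Iᶜ})`.
-/

open MvPolynomial Finset Matrix

theorem Matrix.det_of_add_smul_eq_sum_piecewise {ι S : Type*} [Fintype ι] [DecidableEq ι]
    [CommRing S] (a b : ι → ι → S) (d : ι → S) :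
    (of fun i => a i + d i • b i).det =
      ∑ s : Finset ι, (∏ i ∈ sᶜ, d i) * (of (s.piecewise a b)).det := by
  have hsplit (s : Finset ι) : s.piecewise a (fun i => d i • b i) =
      sᶜ.piecewise (fun i => d i • s.piecewise a b i) (s.piecewise a b) := by
    funext i
    by_cases h : i ∈ s <;> simp [h]
  refine (detRowAlternating.map_add_univ a (fun i => d i • b i)).trans
    (sum_congr rfl fun s _ => ?_)
  rw [hsplit]
  exact detRowAlternating.toMultilinearMap.map_piecewise_smul d _ sᶜ

theorem det_add_mul_diagonal_eq_sum_shuffleMatrix {n : ℕ} {S : Type*} [CommRing S]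
    (A B : Matrix (Fin n) (Fin n) S) (d : Fin n → S) :
    (A + B * diagonal d).det =
      ∑ s : Finset (Fin n), (∏ i ∈ sᶜ, d i) * (shuffleMatrix A B s).det := by
  have hcols : (A + B * diagonal d)ᵀ =
      of fun j => (fun i => A i j) + d j • (fun i => B i j) := by
    ext i j
    simp [mul_diagonal, mul_comm]
  have hshuffle (s : Finset (Fin n)) :
      of (s.piecewise (fun j i => A i j) (fun j i => B i j)) = (shuffleMatrix A B s)ᵀ := by
    ext i j
    by_cases h : i ∈ s <;> simp [h, shuffleMatrix]
  rw [← det_transpose, hcols, det_of_add_smul_eq_sum_piecewise]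
  simp only [hshuffle, det_transpose]

theorem shuffleMatrix_map {n : ℕ} {R S : Type*} (A B : Matrix (Fin n) (Fin n) R) (f : R → S)
    (s : Finset (Fin n)) :
    shuffleMatrix (A.map f) (B.map f) s = (shuffleMatrix A B s).map f := by
  ext i j
  by_cases h : j ∈ s <;> simp [h, shuffleMatrix]

theorem RingHom.map_det_shuffleMatrix {n : ℕ} {R S : Type*} [CommRing R] [CommRing S]
    (f : R →+* S) (A B : Matrix (Fin n) (Fin n) R) (s : Finset (Fin n)) :
    f (shuffleMatrix A B s).det = (shuffleMatrix (A.map f) (B.map f) s).det := by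
  rw [shuffleMatrix_map, RingHom.map_det, RingHom.mapMatrix_apply]

theorem Finsupp.indicator_add_indicator_eq_one_iff {σ : Type*} [Fintype σ] [DecidableEq σ]
    (s t : Finset σ) :
    Finsupp.indicator s (fun _ _ => 1) + Finsupp.indicator t (fun _ _ => 1) =
        Finsupp.equivFunOnFinite.symm (fun _ => 1) ↔ t = sᶜ := by
  simp only [Finsupp.ext_iff, Finset.ext_iff, Finsupp.add_apply, Finsupp.indicator_apply,
    Finsupp.coe_equivFunOnFinite_symm, mem_compl]
  refine forall_congr' fun i => ?_
  by_cases hs : i ∈ s <;> by_cases ht : i ∈ t <;> simp [hs, ht]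

theorem MvPolynomial.prod_X_eq_monomial {σ R : Type*} [CommSemiring R] (s : Finset σ) :
    ∏ i ∈ s, (X i : MvPolynomial σ R) = monomial (Finsupp.indicator s fun _ _ => 1) 1 := by
  simpa using prod_X_pow (R := R) (fun _ => 1) s

theorem MvPolynomial.coeff_one_prod_X_mul_prod_X {σ R : Type*} [Fintype σ] [DecidableEq σ]
    [CommSemiring R] (s t : Finset σ) :
    coeff (Finsupp.equivFunOnFinite.symm fun _ => 1)
        ((∏ i ∈ s, (X i : MvPolynomial σ R)) * ∏ i ∈ t, X i) = if t = sᶜ then 1 else 0 := by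
  rw [prod_X_eq_monomial, prod_X_eq_monomial, monomial_mul, mul_one, coeff_monomial]
  exact if_congr (Finsupp.indicator_add_indicator_eq_one_iff s t) rfl rfl

theorem MvPolynomial.coeff_one_sq_sum_prod_X_mul_C {σ R : Type*} [Fintype σ] [DecidableEq σ]
    [CommSemiring R] (c : Finset σ → R) :
    coeff (Finsupp.equivFunOnFinite.symm fun _ => 1)
        ((∑ s : Finset σ, (∏ i ∈ sᶜ, (X i : MvPolynomial σ R)) * C (c s)) ^ 2) =
      ∑ s : Finset σ, c s * c sᶜ := by
  have hterm (s t : Finset σ) :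
      (∏ i ∈ sᶜ, X i) * C (c s) * ((∏ i ∈ tᶜ, X i) * C (c t)) =
        C (c s * c t) * ((∏ i ∈ sᶜ, X i) * ∏ i ∈ tᶜ, (X i : MvPolynomial σ R)) := by
    rw [C_mul]; ring
  simp_rw [sq, sum_mul_sum, coeff_sum, hterm, coeff_C_mul, coeff_one_prod_X_mul_prod_X,
    compl_inj_iff, mul_ite, mul_one, mul_zero, sum_ite_eq', mem_univ, if_true]

/-- `sdet(A,B)` equals the coefficient of the monomial `x_1 ⋯ x_n` in `det(A + BX)²`,
where `X = diag(x_1, …, x_n)`. -/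
theorem sdet_eq_coeff_det_sq {n : ℕ} {R : Type*} [CommRing R]
    (A B : Matrix (Fin n) (Fin n) R) :
    sdet A B =
      MvPolynomial.coeff (Finsupp.equivFunOnFinite.symm fun _ : Fin n => (1 : ℕ))
        ((Matrix.det (A.map MvPolynomial.C +
            B.map MvPolynomial.C * Matrix.diagonal (fun i : Fin n => MvPolynomial.X i))) ^ 2) := by
  rw [sdet, det_add_mul_diagonal_eq_sum_shuffleMatrix]
  simp_rw [← RingHom.map_det_shuffleMatrix, coeff_one_sq_sum_prod_X_mul_C]
end
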